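/- The tangent cone at the origin of the affine septic curve obtained by setting z = 1 in C7 is, up to a nonzero constant multiple, y·(x^2 + (40585383/1587545)·y^2); in particular the lowest-degree homogeneous part of the dehomogenized polynomial is a product of three pairwise non-proportional linear forms over ℂ, so the curve has an ordinary triple point at the origin. -/
import Mathlib

set_option maxRecDepth 8000

open MvPolynomial

/-- The septic C7 ∈ ℚ[x,y,z]. -/
noncomputable def C7 : MvPolynomial (Fin 3) ℚ :=
  8683464 * X 0 ^ 6 * X 1 - 494984955 * X 0 ^ 4 * X 1 ^ 3
    - 1064093674 * X 0 ^ 2 * X 1 ^ 5 - 558251235 * X 1 ^ 7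
    - 11358312 * X 0 ^ 6 * X 2 + 1253331746 * X 0 ^ 4 * X 1 ^ 2 * X 2
    + 8340957732 * X 0 ^ 2 * X 1 ^ 4 * X 2 + 7286240034 * X 1 ^ 6 * X 2
    - 920312219 * X 0 ^ 4 * X 1 * X 2 ^ 2 - 17394911410 * X 0 ^ 2 * X 1 ^ 3 * X 2 ^ 2
    - 32292289971 * X 1 ^ 5 * X 2 ^ 2 + 179839940 * X 0 ^ 4 * X 2 ^ 3
    + 11716330200 * X 0 ^ 2 * X 1 ^ 2 * X 2 ^ 3 + 55580514660 * X 1 ^ 4 * X 2 ^ 3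
    - 1270036000 * X 0 ^ 2 * X 1 * X 2 ^ 4 - 32468306400 * X 1 ^ 3 * X 2 ^ 4

/-- The dehomogenization at z = 1. -/
noncomputable def c7 : MvPolynomial (Fin 2) ℚ := aeval ![X 0, X 1, 1] C7

noncomputable def p3 : MvPolynomial (Fin 2) ℚ :=
  C (-1270036000) * (X 1 * (X 0 ^ 2 + C (40585383 / 1587545) * X 1 ^ 2))
noncomputable def p4 : MvPolynomial (Fin 2) ℚ :=
  C 179839940 * X 0 ^ 4 * X 1 ^ 0 + C 11716330200 * X 0 ^ 2 * X 1 ^ 2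
    + C 55580514660 * X 0 ^ 0 * X 1 ^ 4
noncomputable def p5 : MvPolynomial (Fin 2) ℚ :=
  C (-920312219) * X 0 ^ 4 * X 1 ^ 1 + C (-17394911410) * X 0 ^ 2 * X 1 ^ 3
    + C (-32292289971) * X 0 ^ 0 * X 1 ^ 5
noncomputable def p6 : MvPolynomial (Fin 2) ℚ :=
  C (-11358312) * X 0 ^ 6 * X 1 ^ 0 + C 1253331746 * X 0 ^ 4 * X 1 ^ 2
    + C 8340957732 * X 0 ^ 2 * X 1 ^ 4 + C 7286240034 * X 0 ^ 0 * X 1 ^ 6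
noncomputable def p7 : MvPolynomial (Fin 2) ℚ :=
  C 8683464 * X 0 ^ 6 * X 1 ^ 1 + C (-494984955) * X 0 ^ 4 * X 1 ^ 3
    + C (-1064093674) * X 0 ^ 2 * X 1 ^ 5 + C (-558251235) * X 0 ^ 0 * X 1 ^ 7

lemma term_hom (q : ℚ) (a b : ℕ) :
    (C q * X 0 ^ a * X 1 ^ b : MvPolynomial (Fin 2) ℚ).IsHomogeneous (a + b) := by
  have := (((isHomogeneous_C (Fin 2) q).mul ((isHomogeneous_X ℚ (0 : Fin 2)).pow a)).mul
    ((isHomogeneous_X ℚ (1 : Fin 2)).pow b))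
  simpa using this

lemma p3_expand : p3 = C (-1270036000) * X 0 ^ 2 * X 1 ^ 1
    + C (-32468306400) * X 0 ^ 0 * X 1 ^ 3 := by
  rw [p3, show (C (-32468306400) : MvPolynomial (Fin 2) ℚ)
    = C (-1270036000) * C (40585383 / 1587545) by rw [← C_mul]; norm_num]
  ring

lemma hp3 : p3.IsHomogeneous 3 := by
  rw [p3_expand]
  have := (term_hom (-1270036000) 2 1).add (term_hom (-32468306400) 0 3)
  simpa using this
lemma hp4 : p4.IsHomogeneous 4 := by
  have := ((term_hom 179839940 4 0).add (term_hom 11716330200 2 2)).add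
    (term_hom 55580514660 0 4)
  simpa [p4] using this
lemma hp5 : p5.IsHomogeneous 5 := by
  have := ((term_hom (-920312219) 4 1).add (term_hom (-17394911410) 2 3)).add
    (term_hom (-32292289971) 0 5)
  simpa [p5] using this
lemma hp6 : p6.IsHomogeneous 6 := by
  have := (((term_hom (-11358312) 6 0).add (term_hom 1253331746 4 2)).add
    (term_hom 8340957732 2 4)).add (term_hom 7286240034 0 6)
  simpa [p6] using this
lemma hp7 : p7.IsHomogeneous 7 := by
  have := (((term_hom 8683464 6 1).add (term_hom (-494984955) 4 3)).add
    (term_hom (-1064093674) 2 5)).add (term_hom (-558251235) 0 7)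
  simpa [p7] using this

lemma c7_eq : c7 = p3 + p4 + p5 + p6 + p7 := by
  rw [p3_expand]
  simp only [c7, C7, p4, p5, p6, p7, map_add, map_sub, map_mul, map_pow, aeval_X,
    map_ofNat, map_neg, Matrix.cons_val_zero, Matrix.cons_val_one, Matrix.head_cons,
    Matrix.cons_val_two, Matrix.tail_cons]
  ring

lemma hcomp (k : ℕ) : homogeneousComponent k c7 =
    (if k = 3 then p3 else 0) + (if k = 4 then p4 else 0) + (if k = 5 then p5 else 0)
      + (if k = 6 then p6 else 0) + (if k = 7 then p7 else 0) := by
  rw [c7_eq]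
  simp only [map_add]
  rw [homogeneousComponent_of_mem hp3, homogeneousComponent_of_mem hp4,
    homogeneousComponent_of_mem hp5, homogeneousComponent_of_mem hp6,
    homogeneousComponent_of_mem hp7]

/-- The tangent cone of {c7 = 0} at the origin: the lowest-degree homogeneous part of
`c7` sits in degree 3 and equals a nonzero constant times y·(x² + (40585383/1587545)·y²);
moreover this degree-3 form is a product of three pairwise non-proportional linear forms
over ℂ (an ordinary triple point). -/
theorem stmt5 :
    (∀ k < 3, homogeneousComponent k c7 = 0) ∧
    (∃ c : ℚ, c ≠ 0 ∧
      homogeneousComponent 3 c7 =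
        C c * (X 1 * (X 0 ^ 2 + C (40585383 / 1587545) * X 1 ^ 2))) ∧
    (∃ (ℓ : Fin 3 → MvPolynomial (Fin 2) ℂ) (d : ℂ),
      d ≠ 0 ∧
      (∀ i, (ℓ i).IsHomogeneous 1 ∧ ℓ i ≠ 0) ∧
      (∀ i j, i ≠ j → ¬ ∃ t : ℂ, ℓ i = C t * ℓ j) ∧
      MvPolynomial.map (algebraMap ℚ ℂ) (homogeneousComponent 3 c7) =
        C d * (ℓ 0 * ℓ 1 * ℓ 2)) := by
  have h3 : homogeneousComponent 3 c7 =
      C (-1270036000 : ℚ) * (X 1 * (X 0 ^ 2 + C (40585383 / 1587545) * X 1 ^ 2)) := by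
    rw [hcomp]; norm_num [p3, map_neg]
  refine ⟨?_, ⟨-1270036000, by norm_num, h3⟩, ?_⟩
  · intro k hk
    interval_cases k <;> · rw [hcomp]; norm_num
  · set r : ℚ := 40585383 / 1587545 with hr
    have hrpos : (0:ℝ) < (r : ℝ) := by rw [hr]; norm_num
    set s : ℂ := Complex.I * Real.sqrt (r : ℝ) with hsdef
    have hs2 : s ^ 2 = -((r : ℚ) : ℂ) := by
      have h1 : ((Real.sqrt (r:ℝ) : ℝ) : ℂ) ^ 2 = ((r:ℝ) : ℂ) := by
        rw [← Complex.ofReal_pow, Real.sq_sqrt hrpos.le]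
      rw [hsdef, mul_pow, Complex.I_sq, h1, neg_one_mul]
      norm_cast
    have hs0 : s ≠ 0 := by
      rw [hsdef]
      exact mul_ne_zero Complex.I_ne_zero
        (by exact_mod_cast (Real.sqrt_pos.mpr hrpos).ne')
    refine ⟨![X 1, X 0 - C s * X 1, X 0 + C s * X 1],
      algebraMap ℚ ℂ (-1270036000), by simp, ?_, ?_, ?_⟩
    · intro i
      fin_cases i <;>
        simp only [Fin.isValue, Fin.zero_eta, Fin.mk_one, Fin.reduceFinMk,
          Matrix.cons_val_zero, Matrix.cons_val_one, Matrix.cons_val_two,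
          Matrix.head_cons, Matrix.tail_cons]
      · refine ⟨isHomogeneous_X ℂ 1, ?_⟩
        intro h
        have := congrArg (eval ![(0:ℂ),1]) h
        simp only [eval_X, map_zero, Matrix.cons_val_one, Matrix.head_cons] at this
        exact one_ne_zero this
      · refine ⟨(isHomogeneous_X ℂ 0).sub (by
          simpa using (isHomogeneous_C (Fin 2) s).mul (isHomogeneous_X ℂ 1)), ?_⟩
        intro h
        have := congrArg (eval ![(1:ℂ),0]) h
        simp only [map_sub, map_mul, eval_C, eval_X, map_zero,
          Matrix.cons_val_zero, Matrix.cons_val_one, Matrix.head_cons] at this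
        simp at this
      · refine ⟨(isHomogeneous_X ℂ 0).add (by
          simpa using (isHomogeneous_C (Fin 2) s).mul (isHomogeneous_X ℂ 1)), ?_⟩
        intro h
        have := congrArg (eval ![(1:ℂ),0]) h
        simp only [map_add, map_mul, eval_C, eval_X, map_zero,
          Matrix.cons_val_zero, Matrix.cons_val_one, Matrix.head_cons] at this
        simp at this
    · intro i j hij
      rintro ⟨t, ht⟩
      fin_cases i <;> fin_cases j <;>
        first
        | exact hij rfl
        | · simp only [Fin.isValue, Fin.zero_eta, Fin.mk_one, Fin.reduceFinMk,
              Matrix.cons_val_zero, Matrix.cons_val_one,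
              Matrix.head_cons, Matrix.cons_val_two, Matrix.tail_cons] at ht
            have ha := congrArg (eval ![(1:ℂ),0]) ht
            have hb := congrArg (eval ![(0:ℂ),1]) ht
            simp only [map_add, map_sub, map_mul, eval_C, eval_X,
              Matrix.cons_val_zero, Matrix.cons_val_one, Matrix.head_cons,
              mul_one, mul_zero, sub_zero, add_zero, zero_sub, zero_add] at ha hb
            first
            | exact one_ne_zero ha
            | · rw [← ha] at hb
                simp at hb
                all_goals first
                | exact hs0 (by linear_combination hb / 2)
                | exact hs0 (by linear_combination -hb / 2)
    · rw [h3]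
      have hCs : (C s : MvPolynomial (Fin 2) ℂ) ^ 2 = - C ((r:ℚ) : ℂ) := by
        rw [← map_pow, hs2, map_neg]
      simp only [map_mul, map_add, map_pow, MvPolynomial.map_C, MvPolynomial.map_X,
        Matrix.cons_val_zero, Matrix.cons_val_one, Matrix.head_cons,
        Matrix.cons_val_two, Matrix.tail_cons]
      have hcast : algebraMap ℚ ℂ r = ((r:ℚ):ℂ) := rfl
      rw [hcast]
      linear_combination (C (algebraMap ℚ ℂ (-1270036000)) * X 1 ^ 3) * hCs
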